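/- Let n be even, let a_1, …, a_n be positive integers, and let W = Σ_i a_i. Define an instance of Seat Arrangement with agents P = {p_1, …, p_n} ∪ {c_1, c_2}, preferences f_{p_i}(c_1) = f_{p_i}(c_2) = W/2 and f_{c_j}(p_i) = a_i for all i and j ∈ {1,2}, and all other preferences 0; the seat graph is the disjoint union of two stars, each consisting of a center adjacent to n/2 leaves. Then there is an arrangement π with min_{p ∈ P} U_p(π) ≥ W/2 if and only if {1, …, n} can be partitioned into sets I_1, I_2 with |I_1| = |I_2| = n/2 and Σ_{i ∈ I_1} a_i = Σ_{i ∈ I_2} a_i = W/2. -/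

import Mathlib

open scoped Classical

noncomputable section

namespace SeatArrangement

variable {P V : Type*}

/-- The utility of agent `p` under arrangement `π`:
the sum, over the seat-graph neighbors `v` of `π p`, of `p`'s preference for the agent seated
at `v`. -/
def utility [Fintype V] (G : SimpleGraph V) (f : P → P → ℝ) (π : P ≃ V) (p : P) : ℝ :=
  ∑ v : V, if G.Adj (π p) v then f p (π.symm v) else 0

/-- The social welfare of an arrangement: the sum of the utilities of all agents. -/
def sw [Fintype P] [Fintype V] (G : SimpleGraph V) (f : P → P → ℝ) (π : P ≃ V) : ℝ :=
  ∑ p : P, utility G f π p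

/-- The `(p,q)`-swap arrangement of `π`. -/
def swapArr (π : P ≃ V) (p q : P) : P ≃ V := (Equiv.swap p q).trans π

/-- `{p, q}` is a blocking pair for `π`: both agents strictly improve by swapping seats. -/
def blocking [Fintype V] (G : SimpleGraph V) (f : P → P → ℝ) (π : P ≃ V) (p q : P) : Prop :=
  p ≠ q ∧ utility G f π p < utility G f (swapArr π p q) p
        ∧ utility G f π q < utility G f (swapArr π p q) q

/-- An arrangement is stable if it has no blocking pair. -/
def stable [Fintype V] (G : SimpleGraph V) (f : P → P → ℝ) (π : P ≃ V) : Prop :=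
  ∀ p q : P, ¬ blocking G f π p q

/-- An arrangement is envy-free if no agent would strictly improve by taking
another agent's seat (via a swap). -/
def envyFree [Fintype V] (G : SimpleGraph V) (f : P → P → ℝ) (π : P ≃ V) : Prop :=
  ∀ p q : P, p ≠ q → utility G f (swapArr π p q) p ≤ utility G f π p

/-- The least utility of an agent under `π` (for a finite nonempty set of agents, the
infimum of the range of utilities is the minimum utility). -/
def minUtil [Fintype V] (G : SimpleGraph V) (f : P → P → ℝ) (π : P ≃ V) : ℝ :=
  sInf (Set.range (utility G f π))

/-- A maximin arrangement maximizes the least utility of an agent. -/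
def maximin [Fintype V] (G : SimpleGraph V) (f : P → P → ℝ) (πf : P ≃ V) : Prop :=
  ∀ π : P ≃ V, minUtil G f π ≤ minUtil G f πf

/-- A maximum arrangement maximizes the social welfare. -/
def maximum [Fintype P] [Fintype V] (G : SimpleGraph V) (f : P → P → ℝ) (πm : P ≃ V) : Prop :=
  ∀ π : P ≃ V, sw G f π ≤ sw G f πm

end SeatArrangement

open SeatArrangement

/-- Seats for STATEMENTS 17/18: two star centers (`Fin 2`) and, for each center
`j : Fin 2`, `n/2` leaves `(j, ·)`. -/
abbrev StarSeats (n : ℕ) := Fin 2 ⊕ (Fin 2 × Fin (n / 2))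

/-- The seat graph for STATEMENTS 17/18: the disjoint union of two stars, each consisting
of a center adjacent to `n/2` leaves. -/
def twoStars (n : ℕ) : SimpleGraph (StarSeats n) where
  Adj x y :=
    match x, y with
    | .inl j, .inr l => j = l.1
    | .inr l, .inl j => j = l.1
    | _, _ => False
  symm := by
    constructor
    rintro (x | x) (y | y) h <;> simp_all
  loopless := by
    constructor
    rintro (x | x) h <;> simp_all

/-- Preferences for STATEMENT 17: each element agent `p_i` has preference `W/2` for each of
the two center agents `c_1, c_2`, each center agent has preference `a_i` for `p_i`, and all
other preferences are 0. -/
def prefs17 (n W : ℕ) (a : Fin n → ℕ) : (Fin n ⊕ Fin 2) → (Fin n ⊕ Fin 2) → ℝ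
  | .inl _, .inr _ => (W : ℝ) / 2
  | .inr _, .inl i => a i
  | _, _ => 0


/-!
Both stars have `n/2 + 1` seats. If every agent gets at least `W/2 > 0`, the two center agents
sit in different stars: otherwise the center seat of the other star holds an element agent all of
whose neighbours are element agents, so its utility is `0`. Hence each star holds one center agent
and `n/2` element agents, and a center agent's utility is at most the weight of the element agents
in its star; both weights are at least `W/2` and add up to `W`, so both equal `W/2`. Conversely,
seating `c_j` at the center of star `j` and the elements of `I_j` on its leaves gives every agent
utility exactly `W/2`.
-/

open Finset

namespace SeatArrangement

variable {P V : Type*} [Fintype P] [Fintype V]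

theorem utility_eq_sum_adj (G : SimpleGraph V) (f : P → P → ℝ) (π : P ≃ V) (p : P) :
    utility G f π p = ∑ q with G.Adj (π p) (π q), f p q := by
  rw [utility, sum_filter, ← π.sum_comp]
  simp

theorem utility_le_sum_of_adj_imp_eq {κ : Type*} [DecidableEq κ] (G : SimpleGraph V)
    (f : P → P → ℝ) (π : P ≃ V) (p : P) (s : V → κ) (hs : ∀ v w, G.Adj v w → s v = s w)
    (hf : ∀ q, 0 ≤ f p q) :
    utility G f π p ≤ ∑ q with s (π q) = s (π p), f p q := by
  rw [utility_eq_sum_adj]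
  refine sum_le_sum_of_subset_of_nonneg (fun q => ?_) fun q _ _ => hf q
  simpa only [mem_filter, mem_univ, true_and] using fun h => (hs _ _ h).symm

theorem exists_equiv_prod_fin_of_card_fiber {α β : Type*} [Fintype α] (s : α → β) (m : ℕ)
    (hs : ∀ b, Fintype.card {x // s x = b} = m) : ∃ e : α ≃ β × Fin m, ∀ x, (e x).1 = s x :=
  ⟨(Equiv.sigmaFiberEquiv s).symm.trans
    ((Equiv.sigmaCongrRight fun b => Fintype.equivFinOfCardEq (hs b)).trans
      (Equiv.sigmaEquivProd β (Fin m))), fun _ => rfl⟩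

end SeatArrangement

def StarSeats.star {n : ℕ} : StarSeats n → Fin 2 := Sum.elim id Prod.fst

theorem twoStars_adj_star_eq {n : ℕ} {v w : StarSeats n} (h : (twoStars n).Adj v w) :
    v.star = w.star := by
  rcases v with j | ⟨j, k⟩ <;> rcases w with j' | ⟨j', k'⟩ <;> simp_all [twoStars, StarSeats.star]

theorem StarSeats.card_filter_star_eq (n : ℕ) (j : Fin 2) :
    #{v : StarSeats n | v.star = j} = n / 2 + 1 := by
  rw [card_filter, Fintype.sum_sum_type, Fintype.sum_prod_type]
  fin_cases j <;> simp [StarSeats.star, add_comm]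

section Reduction

variable {n : ℕ} (a : Fin n → ℕ)

theorem prefs17_nonneg (W : ℕ) (p q : Fin n ⊕ Fin 2) : 0 ≤ prefs17 n W a p q := by
  rcases p with _ | _ <;> rcases q with _ | _ <;> simp only [prefs17, le_refl] <;> positivity

theorem sum_prefs17_inr (W : ℕ) (c : Fin 2) (Q : Fin n ⊕ Fin 2 → Prop) [DecidablePred Q] :
    ∑ q with Q q, prefs17 n W a (.inr c) q = ∑ i with Q (.inl i), (a i : ℝ) := by
  rw [sum_filter, Fintype.sum_sum_type, sum_filter]
  simp [prefs17]

theorem star_inr_zero_ne_star_inr_one (hpos : ∀ i, 0 < a i) (π : (Fin n ⊕ Fin 2) ≃ StarSeats n)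
    (hπ : ∀ p, ((∑ i, a i : ℕ) : ℝ) / 2 ≤ utility (twoStars n) (prefs17 n (∑ i, a i) a) π p) :
    (π (.inr 0)).star ≠ (π (.inr 1)).star := by
  intro h
  obtain ⟨j, hj⟩ : ∃ j, j ≠ (π (.inr 0)).star := ⟨_, Fin.succAbove_ne _ 0⟩
  have hcenters : ∀ c, (π (.inr c)).star ≠ j := Fin.forall_fin_two.2 ⟨hj.symm, h ▸ hj.symm⟩
  rcases hp : π.symm (.inl j) with i | c
  · have hi : (π (.inl i)).star = j := by rw [← hp, π.apply_symm_apply]; rfl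
    have hzero : utility (twoStars n) (prefs17 n (∑ i, a i) a) π (.inl i) ≤ 0 := by
      refine (utility_le_sum_of_adj_imp_eq _ _ π _ StarSeats.star
        (fun _ _ => twoStars_adj_star_eq) (prefs17_nonneg a _ _)).trans_eq (sum_eq_zero ?_)
      rintro (i' | c) hq
      · rfl
      · exact absurd ((mem_filter.1 hq).2.trans hi) (hcenters c)
    have hai : (0 : ℝ) < a i := by exact_mod_cast hpos i
    have haW : (a i : ℝ) ≤ ((∑ i, a i : ℕ) : ℝ) := by
      exact_mod_cast single_le_sum (fun _ _ => Nat.zero_le _) (mem_univ i)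
    linarith [hπ (.inl i)]
  · exact hcenters c (by rw [← hp, π.apply_symm_apply]; rfl)

theorem half_le_sum_star_center (π : (Fin n ⊕ Fin 2) ≃ StarSeats n)
    (hπ : ∀ p, ((∑ i, a i : ℕ) : ℝ) / 2 ≤ utility (twoStars n) (prefs17 n (∑ i, a i) a) π p)
    (c : Fin 2) :
    ((∑ i, a i : ℕ) : ℝ) / 2 ≤ ∑ i with (π (.inl i)).star = (π (.inr c)).star, (a i : ℝ) :=
  (hπ (.inr c)).trans <| (utility_le_sum_of_adj_imp_eq _ _ π _ StarSeats.star
    (fun _ _ => twoStars_adj_star_eq) (prefs17_nonneg a _ _)).trans_eq (sum_prefs17_inr a _ c _)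

theorem exists_partition_of_half_le_utility (hn : Even n)
    (hpos : ∀ i, 0 < a i) (π : (Fin n ⊕ Fin 2) ≃ StarSeats n)
    (hπ : ∀ p, ((∑ i, a i : ℕ) : ℝ) / 2 ≤ utility (twoStars n) (prefs17 n (∑ i, a i) a) π p) :
    ∃ I : Finset (Fin n), 2 * #I = n ∧ 2 * ∑ i ∈ I, a i = ∑ i, a i := by
  have hne := star_inr_zero_ne_star_inr_one a hpos π hπ
  set j := (π (.inr 0)).star
  refine ⟨({i | (π (.inl i)).star = j} : Finset (Fin n)), ?_, ?_⟩
  · have hagents : #{q | (π q).star = j} = n / 2 + 1 :=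
      (card_equiv π (by simp)).trans (StarSeats.card_filter_star_eq n j)
    rw [card_filter, Fintype.sum_sum_type, ← card_filter, Fin.sum_univ_two, if_pos rfl,
      if_neg hne.symm] at hagents
    obtain ⟨m, rfl⟩ := hn
    omega
  · have hcompl : univ.filter (fun i => (π (.inl i)).star ≠ j)
        = univ.filter (fun i => (π (.inl i)).star = (π (.inr 1)).star) := by
      have fin_two_ne_iff : ∀ x y z : Fin 2, y ≠ z → (x ≠ y ↔ x = z) := by decide
      exact filter_congr fun i _ => fin_two_ne_iff _ _ _ hne
    have hsplit := sum_filter_add_sum_filter_not univ (fun i => (π (.inl i)).star = j)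
      fun i => (a i : ℝ)
    have h0 := half_le_sum_star_center a π hπ 0
    have h1 := half_le_sum_star_center a π hπ 1
    rw [← hcompl] at h1
    push_cast at h0 h1 ⊢
    exact_mod_cast
      (by linarith : (2 : ℝ) * ∑ i with (π (.inl i)).star = j, (a i : ℝ) = ∑ i, (a i : ℝ))

theorem exists_arrangement_of_partition (I : Finset (Fin n))
    (hI : 2 * #I = n) (hIsum : 2 * ∑ i ∈ I, a i = ∑ i, a i) :
    ∃ π : (Fin n ⊕ Fin 2) ≃ StarSeats n, ∀ p,
      ((∑ i, a i : ℕ) : ℝ) / 2 ≤ utility (twoStars n) (prefs17 n (∑ i, a i) a) π p := by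
  let side : Fin n → Fin 2 := fun i => if i ∈ I then 0 else 1
  have hside : ∀ c, univ.filter (fun i => side i = c) = if c = 0 then I else Iᶜ := by
    rw [Fin.forall_fin_two]; constructor <;> ext i <;> simp [side]
  have hsum : ∀ c, ((∑ i, a i : ℕ) : ℝ) / 2 = ∑ i with side i = c, (a i : ℝ) := by
    have hIr : (2 : ℝ) * ∑ i ∈ I, (a i : ℝ) = ∑ i, (a i : ℝ) := by exact_mod_cast hIsum
    have := sum_add_sum_compl I fun i => (a i : ℝ)
    rw [Fin.forall_fin_two, hside, hside]
    push_cast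
    constructor <;> linarith
  obtain ⟨e, he⟩ := exists_equiv_prod_fin_of_card_fiber side (n / 2) fun c => by
    rw [Fintype.card_subtype, hside]; split_ifs
    · omega
    · rw [card_compl, Fintype.card_fin]; omega
  let π := (Equiv.sumComm _ _).trans (Equiv.sumCongr (Equiv.refl (Fin 2)) e)
  refine ⟨π, ?_⟩
  rintro (i | c)
  · have hadj :
        univ.filter (fun q => (twoStars n).Adj (π (.inl i)) (π q)) = {.inr (side i)} := by
      ext (_ | c) <;> simp [π, twoStars, he]
    rw [utility_eq_sum_adj, hadj, sum_singleton]
    rfl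
  · rw [utility_eq_sum_adj, sum_prefs17_inr, hsum c]
    refine le_of_eq (sum_congr (filter_congr fun i _ => ?_) fun _ _ => rfl)
    simp [π, twoStars, he, eq_comm]

end Reduction

theorem maximin_iff_partition (n : ℕ) (hn : Even n)
    (a : Fin n → ℕ) (hpos : ∀ i, 0 < a i) :
    (∃ π : (Fin n ⊕ Fin 2) ≃ StarSeats n, ∀ p : Fin n ⊕ Fin 2,
      ((∑ i, a i : ℕ) : ℝ) / 2 ≤ utility (twoStars n) (prefs17 n (∑ i, a i) a) π p) ↔
    (∃ I : Finset (Fin n), 2 * I.card = n ∧ 2 * ∑ i ∈ I, a i = ∑ i, a i) :=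
  ⟨fun ⟨π, hπ⟩ => exists_partition_of_half_le_utility a hn hpos π hπ,
    fun ⟨I, hI, hIsum⟩ => exists_arrangement_of_partition a I hI hIsum⟩
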